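/- Let (X,d,μ) be a complete metric measure space where μ is a doubling Borel measure and X satisfies an annular decay property, and let w be a weight on X. Then the following are equivalent: (i) w ∈ RH_∞(X); (ii) w^{s_0} ∈ RH_∞(X) for some s_0 > 0; (iii) w^s ∈ RH_∞(X) for all s > 0. -/

import Mathlib

/-! On a ball `B` let `E = ess sup_B w ≤ C ⨍_B w`. Since `ess sup_B w^s = E^s`, it suffices to bound
`E^s` by a multiple of `⨍_B w^s`. For `s ≥ 1` Jensen's inequality gives `(⨍_B w)^s ≤ ⨍_B w^s`, hence
`E^s ≤ C^s ⨍_B w^s`; for `s ≤ 1` the pointwise bound `w^s ≥ E^(s-1) w` (valid as `w ≤ E` a.e.) gives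
`E^s ≤ C ⨍_B w^s`. So `RH_∞` is stable under every positive power, and the converse follows by
applying this to `w^s₀` and the power `1/s₀`. -/

open MeasureTheory Metric Filter

noncomputable section

namespace Paper

variable {X : Type*} [MetricSpace X] [MeasurableSpace X]

/-- The measure `μ` is doubling with constant `Cd`: every ball has positive finite measure and
doubling the radius increases the measure by at most the factor `Cd`. -/
def IsDoubling (μ : Measure X) (Cd : ℝ) : Prop :=
  1 < Cd ∧ ∀ (x : X) (r : ℝ), 0 < r →
    0 < μ (ball x r) ∧ μ (ball x r) < ⊤ ∧
    μ (ball x (2 * r)) ≤ ENNReal.ofReal Cd * μ (ball x r)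

/-- `X` (with measure `μ`) satisfies the `α`-annular decay property for some `0 ≤ α ≤ 1`. -/
def AnnularDecay (μ : Measure X) : Prop :=
  ∃ α C : ℝ, 0 ≤ α ∧ α ≤ 1 ∧ 1 ≤ C ∧
    ∀ (x : X) (r δ : ℝ), 0 < r → 0 < δ → δ < 1 →
      μ (ball x r \ ball x ((1 - δ) * r)) ≤ ENNReal.ofReal (C * δ ^ α) * μ (ball x r)

/-- A weight: a nonnegative locally integrable function. -/
def IsWeight (μ : Measure X) (w : X → ℝ) : Prop :=
  (∀ x, 0 ≤ w x) ∧ LocallyIntegrable w μ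

/-- The integral average of `f` over the ball `B(x, r)`. -/
def avg (μ : Measure X) (f : X → ℝ) (x : X) (r : ℝ) : ℝ :=
  ⨍ y in ball x r, f y ∂μ

/-- Essential infimum of `f` over the ball `B(x, r)`. -/
def einf (μ : Measure X) (f : X → ℝ) (x : X) (r : ℝ) : ℝ :=
  essInf f (μ.restrict (ball x r))

/-- Essential supremum of `f` over the ball `B(x, r)`. -/
def esup (μ : Measure X) (f : X → ℝ) (x : X) (r : ℝ) : ℝ :=
  essSup f (μ.restrict (ball x r))

/-- The set of admissible `A₁` constants for `w`. -/
def A1Set (μ : Measure X) (w : X → ℝ) : Set ℝ :=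
  {c | 0 ≤ c ∧ ∀ (x : X) (r : ℝ), 0 < r → avg μ w x r ≤ c * einf μ w x r}

/-- `w ∈ A₁(X)`. -/
def MemA1 (μ : Measure X) (w : X → ℝ) : Prop :=
  (A1Set μ w).Nonempty

/-- The `A₁` constant `[w]_{A₁}` (the least admissible constant). -/
def A1Const (μ : Measure X) (w : X → ℝ) : ℝ :=
  sInf (A1Set μ w)

/-- The `A_p` products over balls, for `1 < p < ∞`. -/
def ApRatios (μ : Measure X) (w : X → ℝ) (p : ℝ) : Set ℝ :=
  {t | ∃ (x : X) (r : ℝ), 0 < r ∧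
    t = avg μ w x r * (avg μ (fun y => w y ^ (-(1 / (p - 1)))) x r) ^ (p - 1)}

/-- `w ∈ A_p(X)` for `1 < p < ∞`. -/
def MemAp (μ : Measure X) (w : X → ℝ) (p : ℝ) : Prop :=
  BddAbove (ApRatios μ w p)

/-- The `A_∞` (reverse Jensen) ratios over balls. -/
def AinftyRatios (μ : Measure X) (w : X → ℝ) : Set ℝ :=
  {t | ∃ (x : X) (r : ℝ), 0 < r ∧
    t = avg μ w x r * Real.exp (-(avg μ (fun y => Real.log (w y)) x r))}

/-- `w ∈ A_∞(X)`. -/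
def MemAinfty (μ : Measure X) (w : X → ℝ) : Prop :=
  BddAbove (AinftyRatios μ w)

/-- The `A_∞` constant `[w]_{A_∞}`. -/
def AinftyConst (μ : Measure X) (w : X → ℝ) : ℝ :=
  sSup (AinftyRatios μ w)

/-- `w ∈ RH_s(X)` for `1 < s < ∞`: the reverse Hölder inequality holds with some constant. -/
def MemRH (μ : Measure X) (w : X → ℝ) (s : ℝ) : Prop :=
  ∃ C : ℝ, ∀ (x : X) (r : ℝ), 0 < r →
    (avg μ (fun y => w y ^ s) x r) ^ (1 / s) ≤ C * avg μ w x r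

/-- The set of admissible `RH_∞` constants for `w`. -/
def RHinftySet (μ : Measure X) (w : X → ℝ) : Set ℝ :=
  {C | ∀ (x : X) (r : ℝ), 0 < r → esup μ w x r ≤ C * avg μ w x r}

/-- `w ∈ RH_∞(X)`. -/
def MemRHinfty (μ : Measure X) (w : X → ℝ) : Prop :=
  (RHinftySet μ w).Nonempty

/-- The infimal constant in the `RH_∞` condition for `w`. -/
def RHinftyConst (μ : Measure X) (w : X → ℝ) : ℝ :=
  sInf (RHinftySet μ w)

/-- The `BMO` mean oscillations of `f` over balls. -/
def bmoRatios (μ : Measure X) (f : X → ℝ) : Set ℝ :=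
  {t | ∃ (x : X) (r : ℝ), 0 < r ∧ t = avg μ (fun y => |f y - avg μ f x r|) x r}

/-- `f ∈ BMO(X)`. -/
def MemBMO (μ : Measure X) (f : X → ℝ) : Prop :=
  LocallyIntegrable f μ ∧ BddAbove (bmoRatios μ f)

/-- `‖f‖_{BMO}`. -/
def bmoNorm (μ : Measure X) (f : X → ℝ) : ℝ :=
  sSup (bmoRatios μ f)

/-- The lower oscillations of `f` over balls. -/
def bloRatios (μ : Measure X) (f : X → ℝ) : Set ℝ :=
  {t | ∃ (x : X) (r : ℝ), 0 < r ∧ t = avg μ f x r - einf μ f x r}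

/-- `f ∈ BLO(X)` (bounded lower oscillation). -/
def MemBLO (μ : Measure X) (f : X → ℝ) : Prop :=
  LocallyIntegrable f μ ∧ BddAbove (bloRatios μ f)

/-- `‖f‖_{BLO}`. -/
def bloNorm (μ : Measure X) (f : X → ℝ) : ℝ :=
  sSup (bloRatios μ f)

/-- The upper oscillations of `f` over balls. -/
def buoRatios (μ : Measure X) (f : X → ℝ) : Set ℝ :=
  {t | ∃ (x : X) (r : ℝ), 0 < r ∧ t = esup μ f x r - avg μ f x r}

/-- `f ∈ BUO(X)` (bounded upper oscillation). -/
def MemBUO (μ : Measure X) (f : X → ℝ) : Prop :=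
  LocallyIntegrable f μ ∧ BddAbove (buoRatios μ f)

/-- `‖f‖_{BUO}`. -/
def buoNorm (μ : Measure X) (f : X → ℝ) : ℝ :=
  sSup (buoRatios μ f)

/-- The natural maximal function `M^♮ f`. -/
def natMax (μ : Measure X) (f : X → ℝ) (x : X) : ℝ :=
  sSup {t | ∃ (z : X) (r : ℝ), 0 < r ∧ x ∈ ball z r ∧ t = avg μ f z r}

/-- The natural minimal function `m^♮ f`. -/
def natMin (μ : Measure X) (f : X → ℝ) (x : X) : ℝ :=
  sInf {t | ∃ (z : X) (r : ℝ), 0 < r ∧ x ∈ ball z r ∧ t = avg μ f z r}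

/-- The Hardy–Littlewood maximal function `M f`. -/
def maxFn (μ : Measure X) (f : X → ℝ) (x : X) : ℝ :=
  natMax μ (fun y => |f y|) x

/-- The (Cruz-Uribe–Neugebauer) minimal function `m f`. -/
def minFn (μ : Measure X) (f : X → ℝ) (x : X) : ℝ :=
  natMin μ (fun y => |f y|) x

/-- `f ∈ L^∞_loc(X)`: essentially bounded on every compact subset. -/
def LinftyLoc (μ : Measure X) (f : X → ℝ) : Prop :=
  ∀ K : Set X, IsCompact K → ∃ c : ℝ, ∀ᵐ x ∂(μ.restrict K), |f x| ≤ c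

/-- `f ∈ L^∞(X)`. -/
def MemLinfty (μ : Measure X) (f : X → ℝ) : Prop :=
  ∃ c : ℝ, ∀ᵐ x ∂μ, |f x| ≤ c

/-- `‖f‖_{L^∞}`. -/
def linftyNorm (μ : Measure X) (f : X → ℝ) : ℝ :=
  essSup (fun x => |f x|) μ

end Paper

open Paper

section RpowEssSup

variable {α : Type*} [MeasurableSpace α] {ν : Measure α} {v : α → ℝ} {s C E : ℝ}

lemma Real.rpow_sub_one_mul_le_rpow {x : ℝ} (hx : 0 ≤ x) (hxE : x ≤ E) (hs : s ≤ 1) :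
    E ^ (s - 1) * x ≤ x ^ s := by
  rcases hx.eq_or_lt with rfl | hx
  · simpa using Real.rpow_nonneg le_rfl s
  calc E ^ (s - 1) * x ≤ x ^ (s - 1) * x :=
        mul_le_mul_of_nonneg_right (Real.rpow_le_rpow_of_nonpos hx hxE (sub_nonpos.2 hs)) hx.le
    _ = x ^ s := by rw [Real.rpow_sub_one hx.ne', div_mul_cancel₀ _ hx.ne']

lemma essSup_nonneg [NeZero ν] (hv : ∀ y, 0 ≤ v y) : 0 ≤ essSup v ν := by
  by_cases hb : IsBoundedUnder (· ≤ ·) (ae ν) v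
  · calc (0 : ℝ) = essSup (fun _ => 0) ν := (essSup_const 0 (NeZero.ne ν)).symm
      _ ≤ essSup v ν :=
        essSup_mono_ae (ae_of_all _ hv) (isCoboundedUnder_le_of_le _ fun _ => le_rfl) hb
  · rw [essSup, Real.limsup_of_not_isBoundedUnder hb]

lemma essSup_rpow_le_rpow_essSup [NeZero ν] (hv : ∀ y, 0 ≤ v y) (hs : 0 < s) :
    essSup (fun y => v y ^ s) ν ≤ essSup v ν ^ s := by
  by_cases hb : IsBoundedUnder (· ≤ ·) (ae ν) v
  · refine essSup_le_of_ae_le _ ?_ (isCoboundedUnder_le_of_le _ fun y => Real.rpow_nonneg (hv y) s)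
    filter_upwards [ae_le_essSup hb] with y hy using Real.rpow_le_rpow (hv y) hy hs.le
  -- Both sides are the junk value `0`: `v ^ s` is unbounded as well.
  have hbs : ¬ IsBoundedUnder (· ≤ ·) (ae ν) fun y => v y ^ s := by
    rintro ⟨M, hM⟩
    have hM' : ∀ᵐ y ∂ν, v y ^ s ≤ M := hM
    refine hb ⟨M ^ s⁻¹, eventually_map.2 ?_⟩
    filter_upwards [hM'] with y hy
    rw [← Real.rpow_rpow_inv (hv y) hs.ne']
    exact Real.rpow_le_rpow (Real.rpow_nonneg (hv y) s) hy (inv_nonneg.2 hs.le)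
  rw [essSup, essSup, Real.limsup_of_not_isBoundedUnder hb,
    Real.limsup_of_not_isBoundedUnder hbs, Real.zero_rpow hs.ne']

lemma rpow_le_mul_integral_rpow [IsProbabilityMeasure ν] (hv : ∀ y, 0 ≤ v y)
    (hvE : ∀ᵐ y ∂ν, v y ≤ E) (hE : 0 < E) (hs : 0 < s) (hC : 0 ≤ C)
    (hEC : E ≤ C * ∫ y, v y ∂ν) : E ^ s ≤ C ^ max s 1 * ∫ y, v y ^ s ∂ν := by
  have hint : Integrable v ν := by
    by_contra hni
    rw [integral_undef hni, mul_zero] at hEC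
    linarith
  have hints : Integrable (fun y => v y ^ s) ν := by
    refine .of_bound (hint.aemeasurable.pow_const s).aestronglyMeasurable (E ^ s) ?_
    filter_upwards [hvE] with y hy
    rw [Real.norm_of_nonneg (Real.rpow_nonneg (hv y) s)]
    exact Real.rpow_le_rpow (hv y) hy hs.le
  rcases le_total s 1 with hs1 | hs1
  · calc E ^ s = E ^ (s - 1) * E := by rw [Real.rpow_sub_one hE.ne', div_mul_cancel₀ _ hE.ne']
      _ ≤ E ^ (s - 1) * (C * ∫ y, v y ∂ν) := by gcongr
      _ = C * ∫ y, E ^ (s - 1) * v y ∂ν := by rw [integral_const_mul]; ring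
      _ ≤ C * ∫ y, v y ^ s ∂ν := by
        refine mul_le_mul_of_nonneg_left (integral_mono_of_nonneg ?_ hints ?_) hC
        · exact ae_of_all _ fun y => mul_nonneg (Real.rpow_nonneg hE.le _) (hv y)
        · filter_upwards [hvE] with y hy using Real.rpow_sub_one_mul_le_rpow (hv y) hy hs1
      _ = C ^ max s 1 * ∫ y, v y ^ s ∂ν := by rw [max_eq_right hs1, Real.rpow_one]
  · have hjensen : (∫ y, v y ∂ν) ^ s ≤ ∫ y, v y ^ s ∂ν :=
      (convexOn_rpow hs1).map_integral_le (Real.continuous_rpow_const (by linarith)).continuousOn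
        isClosed_Ici (ae_of_all _ hv) hint hints
    calc E ^ s ≤ (C * ∫ y, v y ∂ν) ^ s := by gcongr
      _ = C ^ s * (∫ y, v y ∂ν) ^ s := Real.mul_rpow hC (integral_nonneg hv)
      _ ≤ C ^ max s 1 * ∫ y, v y ^ s ∂ν := by rw [max_eq_left hs1]; gcongr

theorem essSup_rpow_le_mul_integral_rpow [IsProbabilityMeasure ν] (hv : ∀ y, 0 ≤ v y)
    (hs : 0 < s) (hC : 0 ≤ C) (h : essSup v ν ≤ C * ∫ y, v y ∂ν) :
    essSup (fun y => v y ^ s) ν ≤ C ^ max s 1 * ∫ y, v y ^ s ∂ν := by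
  refine (essSup_rpow_le_rpow_essSup hv hs).trans ?_
  rcases (essSup_nonneg (ν := ν) hv).eq_or_lt with hE | hE
  · rw [← hE, Real.zero_rpow hs.ne']
    exact mul_nonneg (Real.rpow_nonneg hC _) (integral_nonneg fun y => Real.rpow_nonneg (hv y) s)
  have hb : IsBoundedUnder (· ≤ ·) (ae ν) v := by
    by_contra hb
    rw [essSup, Real.limsup_of_not_isBoundedUnder hb] at hE
    exact hE.false
  exact rpow_le_mul_integral_rpow hv (ae_le_essSup hb) hE hs hC h

theorem essSup_rpow_le_mul_average_rpow [IsFiniteMeasure ν] [NeZero ν] (hv : ∀ y, 0 ≤ v y)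
    (hs : 0 < s) (hC : 0 ≤ C) (h : essSup v ν ≤ C * ⨍ y, v y ∂ν) :
    essSup (fun y => v y ^ s) ν ≤ C ^ max s 1 * ⨍ y, v y ^ s ∂ν := by
  have hc : (ν Set.univ)⁻¹ ≠ 0 := ENNReal.inv_ne_zero.2 (measure_ne_top ν _)
  rw [average_eq', ← essSup_ennreal_smul_measure hc] at h ⊢
  exact essSup_rpow_le_mul_integral_rpow hv hs hC h

end RpowEssSup

namespace Paper

variable {X : Type*} [MetricSpace X] [MeasurableSpace X] {μ : Measure X} {v : X → ℝ} {s : ℝ}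

theorem MemRHinfty.rpow (hμ₀ : ∀ (x : X) (r : ℝ), 0 < r → μ (ball x r) ≠ 0)
    (hμ : ∀ (x : X) (r : ℝ), 0 < r → μ (ball x r) ≠ ⊤) (hv : ∀ y, 0 ≤ v y) (hs : 0 < s)
    (h : MemRHinfty μ v) : MemRHinfty μ fun y => v y ^ s := by
  obtain ⟨C, hC⟩ := h
  refine ⟨max C 0 ^ max s 1, fun x r hr => ?_⟩
  have : IsFiniteMeasure (μ.restrict (ball x r)) := isFiniteMeasure_restrict.2 (hμ x r hr)
  have : NeZero (μ.restrict (ball x r)) := ⟨by simpa using hμ₀ x r hr⟩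
  have havg : 0 ≤ avg μ v x r := by
    rw [avg, average_eq']
    exact integral_nonneg hv
  exact essSup_rpow_le_mul_average_rpow hv hs (le_max_right _ _)
    ((hC x r hr).trans (mul_le_mul_of_nonneg_right (le_max_left _ _) havg))

theorem memRHinfty_rpow_iff (hμ₀ : ∀ (x : X) (r : ℝ), 0 < r → μ (ball x r) ≠ 0)
    (hμ : ∀ (x : X) (r : ℝ), 0 < r → μ (ball x r) ≠ ⊤) (hv : ∀ y, 0 ≤ v y) (hs : 0 < s) :
    MemRHinfty μ (fun y => v y ^ s) ↔ MemRHinfty μ v := by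
  refine ⟨fun h => ?_, MemRHinfty.rpow hμ₀ hμ hv hs⟩
  have hroot := h.rpow hμ₀ hμ (fun y => Real.rpow_nonneg (hv y) s) (inv_pos.2 hs)
  simpa only [Real.rpow_rpow_inv (hv _) hs.ne'] using hroot

end Paper

theorem RHinfty_pow_equivalences_general
    {X : Type*} [MetricSpace X] [MeasurableSpace X]
    (μ : Measure X) (Cd : ℝ) (hμ : IsDoubling μ Cd)
    (w : X → ℝ) (hw : IsWeight μ w) :
    (MemRHinfty μ w ↔ ∃ s₀ : ℝ, 0 < s₀ ∧ MemRHinfty μ (fun x => w x ^ s₀)) ∧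
    (MemRHinfty μ w ↔ ∀ s : ℝ, 0 < s → MemRHinfty μ (fun x => w x ^ s)) := by
  have hpow : ∀ s : ℝ, 0 < s → (MemRHinfty μ (fun x => w x ^ s) ↔ MemRHinfty μ w) :=
    fun s => memRHinfty_rpow_iff (fun x r hr => (hμ.2 x r hr).1.ne')
      (fun x r hr => (hμ.2 x r hr).2.1.ne) hw.1
  constructor
  · exact ⟨fun h => ⟨1, one_pos, (hpow 1 one_pos).2 h⟩, fun ⟨s, hs, h⟩ => (hpow s hs).1 h⟩
  · exact ⟨fun h s hs => (hpow s hs).2 h, fun h => (hpow 1 one_pos).1 (h 1 one_pos)⟩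

/-- `w ∈ RH_∞` iff `w^{s₀} ∈ RH_∞` for some `s₀ > 0` iff `w^s ∈ RH_∞` for all `s > 0`. -/
theorem RHinfty_pow_equivalences
    {X : Type*} [MetricSpace X] [CompleteSpace X] [MeasurableSpace X] [BorelSpace X]
    (μ : Measure X) (Cd : ℝ) (hμ : IsDoubling μ Cd) (hX : AnnularDecay μ)
    (w : X → ℝ) (hw : IsWeight μ w) :
    (MemRHinfty μ w ↔ ∃ s₀ : ℝ, 0 < s₀ ∧ MemRHinfty μ (fun x => w x ^ s₀)) ∧
    (MemRHinfty μ w ↔ ∀ s : ℝ, 0 < s → MemRHinfty μ (fun x => w x ^ s)) :=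
  RHinfty_pow_equivalences_general μ Cd hμ w hw
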